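/- Let D be a Bayesian network distribution on {0,1}^n whose DAG is topologically ordered by the identity ordering, let f : {0,1}^n → ℝ, let 0 ≤ k ≤ n, and let α ⊆ {n−k+1,…,n}. With g_α(u) = Σ_{β ⊆ {1,…,n−k}} f̂_{β∪α} φ_β(u) as above, and U distributed as the marginal of the first n−k coordinates of X ∼ D, one has E_U[g_α(U)²] = Σ_{β ⊆ {1,…,n−k}} (f̂_{β∪α})². -/

import Mathlib

/-!
A Bayesian network (BN) distribution on {0,1}^n: a DAG on [n] (encoded by parent
sets together with a rank function witnessing acyclicity) and, for each node `v`,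
a conditional probability `cond v x ∈ (0,1)` of `X_v = 1` given the parent values,
depending only on the coordinates in `pa v`.  The joint distribution is
`prob x = ∏ v, P(x_v | x_{pa v})`, and the BN-induced basis functions are
`φ_v(x) = (x_v − μ_{v,x_pa(v)})/σ_{v,x_pa(v)}`, `φ_S = ∏_{v∈S} φ_v`.
-/

open Finset

noncomputable section

/-- Interpret a Boolean as a real number (`true ↦ 1`, `false ↦ 0`). -/
def b2r (b : Bool) : ℝ := if b then 1 else 0

/-- A Bayesian network distribution on `{0,1}^n`. -/
structure BayesNet (n : ℕ) where
  /-- parent set of each node -/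
  pa : Fin n → Finset (Fin n)
  /-- the parent relation is acyclic (a DAG) -/
  acyclic : ∃ rank : Fin n → ℕ, ∀ v u, u ∈ pa v → rank u < rank v
  /-- `cond v x = P(X_v = 1 | X_{pa v} = x_{pa v})` -/
  cond : Fin n → (Fin n → Bool) → ℝ
  /-- the conditional probability of `v` depends only on the parents of `v` -/
  cond_local : ∀ v x y, (∀ u ∈ pa v, x u = y u) → cond v x = cond v y
  cond_pos : ∀ v x, 0 < cond v x
  cond_lt_one : ∀ v x, cond v x < 1

namespace BayesNet

variable {n : ℕ}

/-- The joint probability mass function `D(x) = ∏_v P(x_v | x_{pa v})`. -/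
def prob (B : BayesNet n) (x : Fin n → Bool) : ℝ :=
  ∏ v, if x v then B.cond v x else 1 - B.cond v x

/-- Conditional standard deviation `σ_{v, x_{pa v}}`. -/
def sigma (B : BayesNet n) (v : Fin n) (x : Fin n → Bool) : ℝ :=
  Real.sqrt (B.cond v x * (1 - B.cond v x))

/-- BN-induced basis function of a single node. -/
def phi (B : BayesNet n) (v : Fin n) (x : Fin n → Bool) : ℝ :=
  (b2r (x v) - B.cond v x) / B.sigma v x

/-- BN-induced basis function `φ_S = ∏_{v ∈ S} φ_v` (with `φ_∅ ≡ 1`). -/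
def phiS (B : BayesNet n) (S : Finset (Fin n)) (x : Fin n → Bool) : ℝ :=
  ∏ v ∈ S, B.phi v x

/-- Expectation with respect to the BN distribution. -/
def expect (B : BayesNet n) (g : (Fin n → Bool) → ℝ) : ℝ :=
  ∑ x, B.prob x * g x

/-- Fourier coefficient `f̂_S = E_D[f(X) φ_S(X)]`. -/
def coeff (B : BayesNet n) (f : (Fin n → Bool) → ℝ) (S : Finset (Fin n)) : ℝ :=
  B.expect fun x => f x * B.phiS S x

/-- Conditional expectation `E[g(X) | X_u = y_u for all u ∈ A]`. -/
def condExp (B : BayesNet n) (g : (Fin n → Bool) → ℝ) (A : Finset (Fin n))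
    (y : Fin n → Bool) : ℝ :=
  (∑ x ∈ univ.filter (fun x : Fin n → Bool => ∀ u ∈ A, x u = y u), B.prob x * g x) /
  (∑ x ∈ univ.filter (fun x : Fin n → Bool => ∀ u ∈ A, x u = y u), B.prob x)

/-- The union of the parent sets of the nodes of `S`. -/
def paS (B : BayesNet n) (S : Finset (Fin n)) : Finset (Fin n) := S.biUnion B.pa

/-- Spectral norm `L1(f) = Σ_S |f̂_S|`. -/
def L1 (B : BayesNet n) (f : (Fin n → Bool) → ℝ) : ℝ :=
  ∑ S : Finset (Fin n), |B.coeff f S|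

end BayesNet

/-!
The basis functions `φ_S` are orthonormal in `L²(D)`, so the claim is Parseval's identity for
the finite family `(φ_β)_β`. Orthonormality is proved by summing out the coordinates one at a
time in topological order. Let `W_j(x) = ∏_{u < j} P(x_u | x_{pa u})`. Since every parent of
`u < j` precedes `u`, neither `W_j` nor `φ_u` for `u < j` depends on `x_j`; summing
`W_{j+1} φ_S φ_T` over the two values of `x_j` therefore leaves `W_j φ_{S∖j} φ_{T∖j}` times
a conditional moment of `φ_j` given its parents, and these are `E[1] = E[φ_j²] = 1` and
`E[φ_j] = 0`. Summing over all of `{0,1}^n`, the coordinates `≥ j` are free, which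
contributes the factor `2 ^ (n - j)`.
-/

open Function

theorem sum_sum_update_bool {ι M : Type*} [Fintype ι] [DecidableEq ι] [AddCommMonoid M]
    (i : ι) (F : (ι → Bool) → M) :
    ∑ x, ∑ b, F (update x i b) = 2 • ∑ x, F x := by
  have hflip : Involutive fun x : ι → Bool => update x i (!x i) := fun x => by simp
  have hpair : ∀ x, ∑ b, F (update x i b) = F x + F (update x i (!x i)) := by
    intro x
    rw [Fintype.sum_bool]
    cases hx : x i
    · rw [show update x i false = x by simp [← hx], add_comm, Bool.not_false]
    · rw [show update x i true = x by simp [← hx], Bool.not_true]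
  rw [sum_congr rfl fun x _ => hpair x, sum_add_distrib, two_nsmul]
  exact congrArg _ (Equiv.sum_comp (hflip.toPerm _) F)

theorem sum_mul_eq_sum_mul_sum_update_div_two {ι : Type*} [Fintype ι] [DecidableEq ι]
    (i : ι) {G : (ι → Bool) → ℝ} (hG : ∀ x b, G (update x i b) = G x)
    (h : (ι → Bool) → ℝ) :
    ∑ x, G x * h x = (∑ x, G x * ∑ b, h (update x i b)) / 2 := by
  have := sum_sum_update_bool i fun x => G x * h x
  simp only [hG, ← mul_sum, nsmul_eq_mul, Nat.cast_ofNat] at this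
  linarith

theorem Finset.eq_iff_erase_eq_and_mem_iff {α : Type*} [DecidableEq α] {S T : Finset α}
    (v : α) :
    S = T ↔ S.erase v = T.erase v ∧ (v ∈ S ↔ v ∈ T) := by
  refine ⟨by rintro rfl; simp, fun ⟨h, hv⟩ => ext fun u => ?_⟩
  by_cases huv : u = v
  · rwa [huv]
  · simpa [huv] using congrArg (u ∈ ·) h

namespace BayesNet

variable {n : ℕ} (B : BayesNet n)

def condProb (v : Fin n) (x : Fin n → Bool) : ℝ :=
  if x v then B.cond v x else 1 - B.cond v x

def prefixWeight (j : ℕ) (x : Fin n → Bool) : ℝ :=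
  ∏ u ∈ univ.filter (fun u : Fin n => (u : ℕ) < j), B.condProb u x

theorem sq_sigma (v : Fin n) (x : Fin n → Bool) :
    B.sigma v x ^ 2 = B.cond v x * (1 - B.cond v x) :=
  Real.sq_sqrt (mul_nonneg (B.cond_pos v x).le (sub_nonneg.2 (B.cond_lt_one v x).le))

theorem sigma_ne_zero (v : Fin n) (x : Fin n → Bool) : B.sigma v x ≠ 0 :=
  (Real.sqrt_pos.2 (mul_pos (B.cond_pos v x) (sub_pos.2 (B.cond_lt_one v x)))).ne'

theorem cond_update_of_notMem_pa {u v : Fin n} (hv : v ∉ B.pa u) (x : Fin n → Bool)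
    (b : Bool) :
    B.cond u (update x v b) = B.cond u x :=
  B.cond_local u _ _ fun _ hw => update_of_ne (ne_of_mem_of_not_mem hw hv) _ _

theorem notMem_pa_of_le (hord : ∀ v u, u ∈ B.pa v → u < v) {u v : Fin n} (huv : u ≤ v) :
    v ∉ B.pa u :=
  fun h => (hord u v h).not_ge huv

theorem condProb_update_of_lt (hord : ∀ v u, u ∈ B.pa v → u < v) {u v : Fin n} (huv : u < v)
    (x : Fin n → Bool) (b : Bool) : B.condProb u (update x v b) = B.condProb u x := by
  rw [condProb, condProb, B.cond_update_of_notMem_pa (B.notMem_pa_of_le hord huv.le),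
    update_of_ne huv.ne]

theorem phi_update_of_lt (hord : ∀ v u, u ∈ B.pa v → u < v) {u v : Fin n} (huv : u < v)
    (x : Fin n → Bool) (b : Bool) : B.phi u (update x v b) = B.phi u x := by
  rw [phi, phi, sigma, sigma, B.cond_update_of_notMem_pa (B.notMem_pa_of_le hord huv.le),
    update_of_ne huv.ne]

theorem phiS_update_of_lt (hord : ∀ v u, u ∈ B.pa v → u < v) {S : Finset (Fin n)} {v : Fin n}
    (hS : ∀ u ∈ S, u < v) (x : Fin n → Bool) (b : Bool) :
    B.phiS S (update x v b) = B.phiS S x :=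
  prod_congr rfl fun u hu => B.phi_update_of_lt hord (hS u hu) x b

theorem prefixWeight_update_of_le (hord : ∀ v u, u ∈ B.pa v → u < v) {j : ℕ} {v : Fin n}
    (hv : j ≤ v) (x : Fin n → Bool) (b : Bool) :
    B.prefixWeight j (update x v b) = B.prefixWeight j x :=
  prod_congr rfl fun _ hu =>
    B.condProb_update_of_lt hord (Fin.lt_def.2 ((mem_filter.1 hu).2.trans_le hv)) x b

theorem prefixWeight_succ {j : ℕ} (hj : j < n) (x : Fin n → Bool) :
    B.prefixWeight (j + 1) x = B.condProb ⟨j, hj⟩ x * B.prefixWeight j x := by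
  have : univ.filter (fun u : Fin n => (u : ℕ) < j + 1)
      = insert ⟨j, hj⟩ (univ.filter fun u : Fin n => (u : ℕ) < j) := by
    ext u
    simp only [mem_filter, mem_univ, true_and, mem_insert, Fin.ext_iff]
    omega
  rw [prefixWeight, this, prod_insert (by simp), prefixWeight]

theorem prefixWeight_self : B.prefixWeight n = B.prob := by
  funext x
  rw [prefixWeight, filter_true_of_mem fun u _ => u.isLt]
  rfl

theorem phiS_eq_mul_phiS_erase (S : Finset (Fin n)) (v : Fin n) (x : Fin n → Bool) :
    B.phiS S x = (if v ∈ S then B.phi v x else 1) * B.phiS (S.erase v) x := by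
  split_ifs with h
  · exact (mul_prod_erase S _ h).symm
  · rw [erase_eq_of_notMem h, one_mul]

theorem sum_condProb_update_mul_phi_mul_phi {v : Fin n} (hv : v ∉ B.pa v) (x : Fin n → Bool)
    (S T : Finset (Fin n)) :
    ∑ b, B.condProb v (update x v b) *
        ((if v ∈ S then B.phi v (update x v b) else 1) *
          (if v ∈ T then B.phi v (update x v b) else 1))
      = if (v ∈ S ↔ v ∈ T) then 1 else 0 := by
  have hc : ∀ b, B.cond v (update x v b) = B.cond v x := B.cond_update_of_notMem_pa hv x
  have hσ : ∀ b, B.sigma v (update x v b) = B.sigma v x := fun b => by rw [sigma, sigma, hc]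
  have hσ0 := B.sigma_ne_zero v x
  have hσ2 := B.sq_sigma v x
  simp only [Fintype.sum_bool, condProb, phi, hc, hσ, update_self, b2r, if_true, if_false,
    Bool.false_eq_true]
  by_cases hS : v ∈ S <;> by_cases hT : v ∈ T <;>
    simp only [hS, hT, if_true, if_false, iff_self, iff_false, false_iff, not_true_eq_false]
  · field_simp
    linear_combination -hσ2
  · field_simp
    ring
  · field_simp
    ring
  · ring

theorem val_lt_of_mem_erase {j : ℕ} (hj : j < n) {U : Finset (Fin n)}
    (hU : ∀ u ∈ U, (u : ℕ) < j + 1) : ∀ u ∈ U.erase ⟨j, hj⟩, (u : ℕ) < j :=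
  fun u hu => lt_of_le_of_ne (Nat.lt_succ_iff.1 (hU u (mem_of_mem_erase hu)))
    fun h => ne_of_mem_erase hu (Fin.ext h)

theorem sum_prefixWeight_succ_mul_phiS_mul_phiS (hord : ∀ v u, u ∈ B.pa v → u < v) {j : ℕ}
    (hj : j < n) {S T : Finset (Fin n)} (hS : ∀ u ∈ S, (u : ℕ) < j + 1)
    (hT : ∀ u ∈ T, (u : ℕ) < j + 1) :
    ∑ x, B.prefixWeight (j + 1) x * (B.phiS S x * B.phiS T x)
      = (∑ x, B.prefixWeight j x *
            (B.phiS (S.erase ⟨j, hj⟩) x * B.phiS (T.erase ⟨j, hj⟩) x))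
          * (if (⟨j, hj⟩ ∈ S ↔ ⟨j, hj⟩ ∈ T) then 1 else 0) / 2 := by
  set v : Fin n := ⟨j, hj⟩
  set G : (Fin n → Bool) → ℝ :=
    fun x => B.prefixWeight j x * (B.phiS (S.erase v) x * B.phiS (T.erase v) x)
  have hG : ∀ x b, G (update x v b) = G x := fun x b => by
    simp only [G, B.prefixWeight_update_of_le hord (j := j) (v := v) le_rfl,
      B.phiS_update_of_lt hord (S := S.erase v) (v := v) (val_lt_of_mem_erase hj hS),
      B.phiS_update_of_lt hord (S := T.erase v) (v := v) (val_lt_of_mem_erase hj hT)]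
  have hsplit : ∀ x, B.prefixWeight (j + 1) x * (B.phiS S x * B.phiS T x) = G x *
      (B.condProb v x *
        ((if v ∈ S then B.phi v x else 1) * (if v ∈ T then B.phi v x else 1))) :=
    fun x => by
      rw [B.prefixWeight_succ hj, B.phiS_eq_mul_phiS_erase S v, B.phiS_eq_mul_phiS_erase T v]
      ring
  simp only [hsplit]
  rw [sum_mul_eq_sum_mul_sum_update_div_two v hG]
  simp only [B.sum_condProb_update_mul_phi_mul_phi (B.notMem_pa_of_le hord le_rfl), ← sum_mul]

theorem sum_prefixWeight_mul_phiS_mul_phiS (hord : ∀ v u, u ∈ B.pa v → u < v) {j : ℕ}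
    (hj : j ≤ n) {S T : Finset (Fin n)} (hS : ∀ u ∈ S, (u : ℕ) < j)
    (hT : ∀ u ∈ T, (u : ℕ) < j) :
    ∑ x, B.prefixWeight j x * (B.phiS S x * B.phiS T x)
      = 2 ^ (n - j) * if S = T then 1 else 0 := by
  induction j generalizing S T with
  | zero =>
    obtain rfl : S = ∅ := eq_empty_of_forall_notMem fun u hu => (hS u hu).not_ge (Nat.zero_le _)
    obtain rfl : T = ∅ := eq_empty_of_forall_notMem fun u hu => (hT u hu).not_ge (Nat.zero_le _)
    simp [prefixWeight, phiS]
  | succ j ih =>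
    rw [B.sum_prefixWeight_succ_mul_phiS_mul_phiS hord hj hS hT,
      ih (Nat.le_of_succ_le hj) (val_lt_of_mem_erase hj hS) (val_lt_of_mem_erase hj hT),
      show n - j = n - (j + 1) + 1 by omega, pow_succ]
    simp only [Finset.eq_iff_erase_eq_and_mem_iff (S := S) (T := T) ⟨j, hj⟩]
    split_ifs <;> simp_all

theorem expect_phiS_mul_phiS (hord : ∀ v u, u ∈ B.pa v → u < v) (S T : Finset (Fin n)) :
    B.expect (fun x => B.phiS S x * B.phiS T x) = if S = T then 1 else 0 := by
  have h := B.sum_prefixWeight_mul_phiS_mul_phiS hord le_rfl (S := S) (T := T)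
    (fun u _ => u.isLt) (fun u _ => u.isLt)
  rwa [prefixWeight_self, Nat.sub_self, pow_zero, one_mul] at h

theorem expect_sum {ι : Type*} (s : Finset ι) (g : ι → (Fin n → Bool) → ℝ) :
    B.expect (fun x => ∑ i ∈ s, g i x) = ∑ i ∈ s, B.expect (g i) := by
  simp only [expect, mul_sum]
  exact sum_comm

theorem expect_const_mul (c : ℝ) (g : (Fin n → Bool) → ℝ) :
    B.expect (fun x => c * g x) = c * B.expect g := by
  simp only [expect, mul_sum, mul_left_comm]

theorem expect_sq_sum_mul_phiS (hord : ∀ v u, u ∈ B.pa v → u < v)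
    (s : Finset (Finset (Fin n))) (a : Finset (Fin n) → ℝ) :
    B.expect (fun x => (∑ β ∈ s, a β * B.phiS β x) ^ 2) = ∑ β ∈ s, a β ^ 2 := by
  have hexpand : ∀ x, (∑ β ∈ s, a β * B.phiS β x) ^ 2
      = ∑ β ∈ s, ∑ γ ∈ s, a β * a γ * (B.phiS β x * B.phiS γ x) := fun x => by
    rw [sq, sum_mul_sum]
    exact sum_congr rfl fun _ _ => sum_congr rfl fun _ _ => by ring
  simp only [hexpand, expect_sum, expect_const_mul, B.expect_phiS_mul_phiS hord, mul_ite,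
    mul_one, mul_zero, sum_ite_eq, sq]
  exact sum_congr rfl fun β hβ => if_pos hβ

end BayesNet

theorem bn_km_partial_spectrum_energy_general {n : ℕ} (B : BayesNet n)
    (hord : ∀ v u, u ∈ B.pa v → u < v)
    (f : (Fin n → Bool) → ℝ) (k : ℕ)
    (α : Finset (Fin n)) :
    B.expect (fun x =>
        (∑ β ∈ univ.filter (fun β : Finset (Fin n) => ∀ i ∈ β, (i : ℕ) < n - k),
          B.coeff f (β ∪ α) * B.phiS β x) ^ 2)
      = ∑ β ∈ univ.filter (fun β : Finset (Fin n) => ∀ i ∈ β, (i : ℕ) < n - k),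
          (B.coeff f (β ∪ α)) ^ 2 :=
  B.expect_sq_sum_mul_phiS hord _ _

/-- With `g_α(u) = Σ_{β ⊆ first n−k coords} f̂_{β∪α} φ_β(u)` and
`U` the (marginal of the) first `n−k` coordinates of `X ∼ D` (note `g_α` only
depends on those coordinates), `E_U[g_α(U)²] = Σ_β (f̂_{β∪α})²`. -/
theorem bn_km_partial_spectrum_energy {n : ℕ} (B : BayesNet n)
    (hord : ∀ v u, u ∈ B.pa v → u < v)
    (f : (Fin n → Bool) → ℝ) (k : ℕ) (hk : k ≤ n)
    (α : Finset (Fin n)) (hα : ∀ i ∈ α, n - k ≤ (i : ℕ)) :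
    B.expect (fun x =>
        (∑ β ∈ univ.filter (fun β : Finset (Fin n) => ∀ i ∈ β, (i : ℕ) < n - k),
          B.coeff f (β ∪ α) * B.phiS β x) ^ 2)
      = ∑ β ∈ univ.filter (fun β : Finset (Fin n) => ∀ i ∈ β, (i : ℕ) < n - k),
          (B.coeff f (β ∪ α)) ^ 2 :=
  bn_km_partial_spectrum_energy_general B hord f k α
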